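/- For every integer n > 2, every ν ≥ 0 and every x ≥ 0, |T_n(s; x) − x| ≤ (2/(n−2)) x + 2ν/(n−2), where T_n(s; x) denotes the Dunkl–Szász–Beta operator applied to the identity function g(s) = s. -/

import Mathlib

open MeasureTheory Filter

/-- Dunkl coefficients: `γ_ν(2r) = 2^(2r) r! Γ(r+ν+1/2)/Γ(ν+1/2)`,
`γ_ν(2r+1) = 2^(2r+1) r! Γ(r+ν+3/2)/Γ(ν+1/2)`. -/
noncomputable def dGamma (ν : ℝ) (r : ℕ) : ℝ :=
  if r % 2 = 0 then
    2 ^ r * (Nat.factorial (r / 2)) * Real.Gamma ((r / 2 : ℕ) + ν + 1 / 2) / Real.Gamma (ν + 1 / 2)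
  else
    2 ^ r * (Nat.factorial (r / 2)) * Real.Gamma ((r / 2 : ℕ) + ν + 3 / 2) / Real.Gamma (ν + 1 / 2)

/-- Dunkl exponential `: e_ν(x) = Σ_{r=0}^∞ x^r/γ_ν(r)`. -/
noncomputable def eDunkl (ν x : ℝ) : ℝ := ∑' r : ℕ, x ^ r / dGamma ν r

/-- Dunkl–Szász–Beta operator
`T_n(g;x) = ((n−1)/e_ν(nx)) Σ_{r=1}^∞ C(n+r−2,r−1)(nx)^r/γ_ν(r) ∫_0^∞ s^{r−1}(1+s)^{−(n+r−1)} g(s) ds + g(0)/e_ν(nx)`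
(the sum over `r ≥ 1` is written via the index shift `r = k+1`). -/
noncomputable def Tn (ν : ℝ) (n : ℕ) (g : ℝ → ℝ) (x : ℝ) : ℝ :=
  ((n : ℝ) - 1) / eDunkl ν (n * x) *
      ∑' k : ℕ, (Nat.choose (n + k - 1) k : ℝ) * (n * x) ^ (k + 1) / dGamma ν (k + 1) *
        ∫ s in Set.Ioi (0 : ℝ), s ^ k / (1 + s) ^ (n + k) * g s
    + g 0 / eDunkl ν (n * x)

/-! The moment `T_n(s; x)` can be computed exactly. The Beta integral
`∫₀^∞ s^(k+1) (1+s)^(-(n+k)) ds = (k+1)! (n-3)! / (n+k-1)!` cancels the binomial coefficient up to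
`(k+1) / ((n-1)(n-2))`, so with `y = n x`
`T_n(s; x) = (∑ₖ (k+1) y^(k+1) / γ_ν(k+1)) / ((n-2) e_ν(y))`.
The Dunkl coefficients satisfy `(r+1) γ_ν(r) ≤ γ_ν(r+1) ≤ (r+1+2ν) γ_ν(r)`, with equality on the right
for even `r` and on the left for odd `r`; comparing the series termwise with `y e_ν(y)` places the
numerator between `(y - 2ν) e_ν(y)` and `y e_ν(y)`, and the bound follows. -/

open Set Topology Nat

section DunklCoefficients

variable {ν : ℝ}

lemma dGamma_two_mul (ν : ℝ) (m : ℕ) : dGamma ν (2 * m) =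
    2 ^ (2 * m) * m ! * Real.Gamma (m + ν + 1 / 2) / Real.Gamma (ν + 1 / 2) := by
  rw [dGamma, if_pos (by omega), show 2 * m / 2 = m by omega]

lemma dGamma_two_mul_add_one (ν : ℝ) (m : ℕ) : dGamma ν (2 * m + 1) =
    2 ^ (2 * m + 1) * m ! * Real.Gamma (m + ν + 3 / 2) / Real.Gamma (ν + 1 / 2) := by
  rw [dGamma, if_neg (by omega), show (2 * m + 1) / 2 = m by omega]

lemma dGamma_zero (hν : 0 ≤ ν) : dGamma ν 0 = 1 := by
  simpa [(Real.Gamma_pos_of_pos (by linarith : 0 < ν + 2⁻¹)).ne'] using dGamma_two_mul ν 0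

lemma dGamma_pos (hν : 0 ≤ ν) (r : ℕ) : 0 < dGamma ν r := by
  have := Real.Gamma_pos_of_pos (by linarith : 0 < ν + 1 / 2)
  have := Real.Gamma_pos_of_pos (by positivity : (0 : ℝ) < (r / 2 : ℕ) + ν + 1 / 2)
  have := Real.Gamma_pos_of_pos (by positivity : (0 : ℝ) < (r / 2 : ℕ) + ν + 3 / 2)
  unfold dGamma
  split_ifs <;> positivity

lemma dGamma_two_mul_add_one_eq_mul (hν : 0 ≤ ν) (m : ℕ) :
    dGamma ν (2 * m + 1) = (2 * m + 1 + 2 * ν) * dGamma ν (2 * m) := by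
  rw [dGamma_two_mul_add_one, dGamma_two_mul, show (m : ℝ) + ν + 3 / 2 = m + ν + 1 / 2 + 1 by ring,
    Real.Gamma_add_one (by positivity)]
  ring

lemma dGamma_two_mul_add_two_eq_mul (ν : ℝ) (m : ℕ) :
    dGamma ν (2 * m + 2) = (2 * m + 2) * dGamma ν (2 * m + 1) := by
  rw [show 2 * m + 2 = 2 * (m + 1) by ring, dGamma_two_mul, dGamma_two_mul_add_one,
    factorial_succ]
  push_cast
  ring_nf

lemma succ_mul_dGamma_le_dGamma_succ (hν : 0 ≤ ν) (r : ℕ) :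
    (r + 1) * dGamma ν r ≤ dGamma ν (r + 1) := by
  have := dGamma_pos hν r
  obtain ⟨m, rfl | rfl⟩ := Nat.even_or_odd' r
  · rw [dGamma_two_mul_add_one_eq_mul hν]
    push_cast
    nlinarith
  · rw [show 2 * m + 1 + 1 = 2 * m + 2 by ring, dGamma_two_mul_add_two_eq_mul]
    exact le_of_eq (by push_cast; ring)

lemma dGamma_succ_le (hν : 0 ≤ ν) (r : ℕ) :
    dGamma ν (r + 1) ≤ (r + 1 + 2 * ν) * dGamma ν r := by
  have := dGamma_pos hν r
  obtain ⟨m, rfl | rfl⟩ := Nat.even_or_odd' r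
  · rw [dGamma_two_mul_add_one_eq_mul hν]
    exact le_of_eq (by push_cast; ring)
  · rw [show 2 * m + 1 + 1 = 2 * m + 2 by ring, dGamma_two_mul_add_two_eq_mul]
    push_cast
    nlinarith

lemma factorial_le_dGamma (hν : 0 ≤ ν) (r : ℕ) : (r ! : ℝ) ≤ dGamma ν r := by
  induction r with
  | zero => simp [dGamma_zero hν]
  | succ r ih =>
    rw [factorial_succ, Nat.cast_mul, Nat.cast_succ]
    exact (mul_le_mul_of_nonneg_left ih (by positivity)).trans
      (succ_mul_dGamma_le_dGamma_succ hν r)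

end DunklCoefficients

section DunklExponential

variable {ν y : ℝ}

lemma summable_pow_div_dGamma (hν : 0 ≤ ν) (hy : 0 ≤ y) :
    Summable fun r : ℕ => y ^ r / dGamma ν r :=
  (Real.summable_pow_div_factorial y).of_nonneg_of_le
    (fun r => div_nonneg (by positivity) (dGamma_pos hν r).le)
    (fun r => div_le_div_of_nonneg_left (by positivity) (by positivity)
      (factorial_le_dGamma hν r))

lemma one_le_eDunkl (hν : 0 ≤ ν) (hy : 0 ≤ y) : 1 ≤ eDunkl ν y := by
  simpa [eDunkl, dGamma_zero hν] using (summable_pow_div_dGamma hν hy).le_tsum 0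
    (fun r _ => div_nonneg (by positivity) (dGamma_pos hν r).le)

lemma succ_mul_pow_div_dGamma_succ_le (hν : 0 ≤ ν) (hy : 0 ≤ y) (k : ℕ) :
    (k + 1) * (y ^ (k + 1) / dGamma ν (k + 1)) ≤ y * (y ^ k / dGamma ν k) := by
  rw [mul_div_assoc', mul_div_assoc', ← pow_succ' y k, div_le_div_iff₀ (dGamma_pos hν _)
    (dGamma_pos hν _)]
  have := mul_le_mul_of_nonneg_left (succ_mul_dGamma_le_dGamma_succ hν k) (pow_nonneg hy (k + 1))
  linarith

lemma mul_pow_div_dGamma_le (hν : 0 ≤ ν) (hy : 0 ≤ y) (k : ℕ) :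
    y * (y ^ k / dGamma ν k) ≤ (k + 1 + 2 * ν) * (y ^ (k + 1) / dGamma ν (k + 1)) := by
  rw [mul_div_assoc', mul_div_assoc', ← pow_succ' y k, div_le_div_iff₀ (dGamma_pos hν _)
    (dGamma_pos hν _)]
  have := mul_le_mul_of_nonneg_left (dGamma_succ_le hν k) (pow_nonneg hy (k + 1))
  linarith

lemma summable_succ_mul_pow_div_dGamma_succ (hν : 0 ≤ ν) (hy : 0 ≤ y) :
    Summable fun k : ℕ => (k + 1) * (y ^ (k + 1) / dGamma ν (k + 1)) :=
  ((summable_pow_div_dGamma hν hy).mul_left y).of_nonneg_of_le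
    (fun k => mul_nonneg (by positivity) (div_nonneg (by positivity) (dGamma_pos hν _).le))
    (succ_mul_pow_div_dGamma_succ_le hν hy)

lemma tsum_succ_mul_pow_div_dGamma_succ_le (hν : 0 ≤ ν) (hy : 0 ≤ y) :
    ∑' k : ℕ, (k + 1) * (y ^ (k + 1) / dGamma ν (k + 1)) ≤ y * eDunkl ν y := by
  rw [eDunkl, ← tsum_mul_left]
  exact (summable_succ_mul_pow_div_dGamma_succ hν hy).tsum_le_tsum
    (succ_mul_pow_div_dGamma_succ_le hν hy) ((summable_pow_div_dGamma hν hy).mul_left y)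

lemma sub_mul_eDunkl_le_tsum_succ_mul_pow_div_dGamma_succ (hν : 0 ≤ ν) (hy : 0 ≤ y) :
    (y - 2 * ν) * eDunkl ν y ≤ ∑' k : ℕ, (k + 1) * (y ^ (k + 1) / dGamma ν (k + 1)) := by
  have hs := summable_pow_div_dGamma hν hy
  have hs' := (summable_nat_add_iff 1).2 hs
  have htail : ∑' k : ℕ, y ^ (k + 1) / dGamma ν (k + 1) ≤ eDunkl ν y := by
    rw [eDunkl, hs.tsum_eq_zero_add, pow_zero, dGamma_zero hν, one_div_one]
    linarith
  have hterm : ∀ k : ℕ, y * (y ^ k / dGamma ν k) - 2 * ν * (y ^ (k + 1) / dGamma ν (k + 1)) ≤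
      (k + 1) * (y ^ (k + 1) / dGamma ν (k + 1)) := by
    intro k
    linarith [mul_pow_div_dGamma_le hν hy k]
  calc (y - 2 * ν) * eDunkl ν y
      ≤ y * eDunkl ν y - 2 * ν * ∑' k : ℕ, y ^ (k + 1) / dGamma ν (k + 1) := by nlinarith
    _ = ∑' k : ℕ, (y * (y ^ k / dGamma ν k) - 2 * ν * (y ^ (k + 1) / dGamma ν (k + 1))) := by
        rw [(hs.mul_left y).tsum_sub (hs'.mul_left (2 * ν)), tsum_mul_left, tsum_mul_left, eDunkl]
    _ ≤ _ := ((hs.mul_left y).sub (hs'.mul_left (2 * ν))).tsum_le_tsum hterm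
        (summable_succ_mul_pow_div_dGamma_succ hν hy)

end DunklExponential

section BetaIntegral

lemma hasDerivAt_neg_inv_mul_one_add_pow (c : ℕ) {s : ℝ} (hs : 1 + s ≠ 0) :
    HasDerivAt (fun t : ℝ => -(((c : ℝ) + 1) * (1 + t) ^ (c + 1))⁻¹) ((1 + s) ^ (c + 2))⁻¹ s := by
  have h := ((((hasDerivAt_id' s).const_add 1).fun_pow (c + 1)).const_mul ((c : ℝ) + 1)).inv
    (mul_ne_zero (by positivity) (pow_ne_zero _ hs))
  refine h.neg.congr_deriv ?_
  push_cast
  field_simp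
  ring

lemma tendsto_inv_one_add_pow_atTop (c : ℕ) (hc : c ≠ 0) :
    Tendsto (fun t : ℝ => ((1 + t) ^ c)⁻¹) atTop (𝓝 0) :=
  ((tendsto_pow_atTop hc).comp (tendsto_atTop_add_const_left atTop 1 tendsto_id)).inv_tendsto_atTop

lemma tendsto_neg_inv_mul_one_add_pow (c : ℕ) :
    Tendsto (fun t : ℝ => -(((c : ℝ) + 1) * (1 + t) ^ (c + 1))⁻¹) atTop (𝓝 0) := by
  have h : Tendsto (fun t : ℝ => ((c : ℝ) + 1) * (1 + t) ^ (c + 1)) atTop atTop :=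
    ((tendsto_pow_atTop (Nat.succ_ne_zero c)).comp
      (tendsto_atTop_add_const_left atTop 1 tendsto_id)).const_mul_atTop (by positivity)
  simpa using h.inv_tendsto_atTop.neg

lemma integrableOn_Ioi_inv_one_add_pow (c : ℕ) :
    IntegrableOn (fun s : ℝ => ((1 + s) ^ (c + 2))⁻¹) (Ioi 0) :=
  integrableOn_Ioi_deriv_of_nonneg'
    (fun s hs => hasDerivAt_neg_inv_mul_one_add_pow c (by simp at hs; positivity))
    (fun s hs => by simp at hs; positivity) (tendsto_neg_inv_mul_one_add_pow c)

lemma integral_Ioi_inv_one_add_pow (c : ℕ) :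
    ∫ s in Ioi (0 : ℝ), ((1 + s) ^ (c + 2))⁻¹ = ((c : ℝ) + 1)⁻¹ := by
  rw [integral_Ioi_of_hasDerivAt_of_tendsto'
    (fun s hs => hasDerivAt_neg_inv_mul_one_add_pow c (by simp at hs; positivity))
    (integrableOn_Ioi_inv_one_add_pow c) (tendsto_neg_inv_mul_one_add_pow c)]
  simp

lemma integrableOn_Ioi_pow_div_one_add_pow (a b : ℕ) :
    IntegrableOn (fun s : ℝ => s ^ a / (1 + s) ^ (a + b + 2)) (Ioi 0) := by
  refine (integrableOn_Ioi_inv_one_add_pow b).mono'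
    (by fun_prop : Measurable _).aestronglyMeasurable ?_
  filter_upwards [ae_restrict_mem measurableSet_Ioi] with s (hs : 0 < s)
  have hsa : s ^ a ≤ (1 + s) ^ a := pow_le_pow_left₀ hs.le (by linarith) a
  rw [Real.norm_of_nonneg (by positivity), add_assoc, pow_add, div_mul_eq_div_div,
    div_eq_mul_inv _ ((1 + s) ^ (b + 2))]
  exact mul_le_of_le_one_left (by positivity) ((div_le_one (by positivity)).2 hsa)

lemma integral_Ioi_pow_succ_div_one_add_pow (a b : ℕ) :
    ∫ s in Ioi (0 : ℝ), s ^ (a + 1) / (1 + s) ^ (a + 1 + b + 2) =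
      ((a : ℝ) + 1) / ((a : ℝ) + b + 2) * ∫ s in Ioi (0 : ℝ), s ^ a / (1 + s) ^ (a + b + 2) := by
  set c := a + b + 1
  set v : ℝ → ℝ := fun t => -(((c : ℝ) + 1) * (1 + t) ^ (c + 1))⁻¹
  have hu : ∀ s ∈ Ioi (0 : ℝ), HasDerivAt (fun s => s ^ (a + 1)) (((a : ℝ) + 1) * s ^ a) s :=
    fun s _ => by simpa using hasDerivAt_pow (a + 1) s
  have hv : ∀ s ∈ Ioi (0 : ℝ), HasDerivAt v ((1 + s) ^ (c + 2))⁻¹ s :=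
    fun s hs => hasDerivAt_neg_inv_mul_one_add_pow c (by simp at hs; positivity)
  have huv' :
      IntegrableOn ((fun s : ℝ => s ^ (a + 1)) * fun s => ((1 + s) ^ (c + 2))⁻¹) (Ioi 0) := by
    refine (integrableOn_Ioi_pow_div_one_add_pow (a + 1) b).congr_fun (fun s _ => ?_)
      measurableSet_Ioi
    simp only [Pi.mul_apply, c]
    ring_nf
  have hu'v : IntegrableOn ((fun s : ℝ => ((a : ℝ) + 1) * s ^ a) * v) (Ioi 0) := by
    refine IntegrableOn.congr_fun ((integrableOn_Ioi_pow_div_one_add_pow a b).const_mul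
      (-((a : ℝ) + 1) / ((c : ℝ) + 1))) (fun s hs => ?_) measurableSet_Ioi
    simp only [Pi.mul_apply, v, c]
    push_cast
    have : (0 : ℝ) < 1 + s := by simp at hs; linarith
    field_simp
  have h_zero : Tendsto ((fun s : ℝ => s ^ (a + 1)) * v) (𝓝[>] 0) (𝓝 0) := by
    have hcont : ContinuousAt ((fun s : ℝ => s ^ (a + 1)) * v) 0 := by
      simp only [v]
      fun_prop (disch := positivity)
    simpa using hcont.tendsto.mono_left nhdsWithin_le_nhds
  have h_infty : Tendsto ((fun s : ℝ => s ^ (a + 1)) * v) atTop (𝓝 0) := by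
    refine squeeze_zero_norm' ?_ (tendsto_inv_one_add_pow_atTop (b + 1) (succ_ne_zero b))
    filter_upwards [eventually_gt_atTop 0] with s hs
    have hsa : s ^ (a + 1) ≤ (1 + s) ^ (a + 1) := pow_le_pow_left₀ hs.le (by linarith) _
    have hc : (1 : ℝ) ≤ (c : ℝ) + 1 := by simp
    rw [Pi.mul_apply, norm_mul, norm_neg, norm_inv, Real.norm_of_nonneg (by positivity),
      Real.norm_of_nonneg (by positivity), show c + 1 = (a + 1) + (b + 1) by omega, pow_add (1 + s),
      ← div_eq_mul_inv, div_le_iff₀ (by positivity)]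
    calc s ^ (a + 1) ≤ (1 + s) ^ (a + 1) := hsa
      _ ≤ ((c : ℝ) + 1) * (1 + s) ^ (a + 1) := le_mul_of_one_le_left (by positivity) hc
      _ = _ := by field_simp
  have hparts := integral_Ioi_mul_deriv_eq_deriv_mul hu hv huv' hu'v h_zero h_infty
  calc ∫ s in Ioi (0 : ℝ), s ^ (a + 1) / (1 + s) ^ (a + 1 + b + 2)
      = ∫ s in Ioi (0 : ℝ), s ^ (a + 1) * ((1 + s) ^ (c + 2))⁻¹ := by
        rw [show a + 1 + b + 2 = c + 2 by omega]
        simp only [div_eq_mul_inv]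
    _ = -∫ s in Ioi (0 : ℝ), ((a : ℝ) + 1) * s ^ a * v s := by
        rw [hparts]
        ring
    _ = _ := by
        rw [← integral_const_mul, ← integral_neg]
        refine setIntegral_congr_fun measurableSet_Ioi (fun s hs => ?_)
        have : (0 : ℝ) < 1 + s := by simp at hs; linarith
        simp only [v, c]
        push_cast
        field_simp
        ring

theorem integral_Ioi_pow_div_one_add_pow (a b : ℕ) :
    ∫ s in Ioi (0 : ℝ), s ^ a / (1 + s) ^ (a + b + 2) = (a ! * b ! / (a + b + 1)! : ℝ) := by
  induction a with
  | zero =>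
    simp only [pow_zero, zero_add, one_div, integral_Ioi_inv_one_add_pow, factorial_zero,
      factorial_succ]
    push_cast
    field_simp
  | succ a ih =>
    rw [integral_Ioi_pow_succ_div_one_add_pow, ih, show a + 1 + b + 1 = (a + b + 1) + 1 by ring,
      factorial_succ a, factorial_succ (a + b + 1)]
    push_cast
    field_simp
    ring

end BetaIntegral

lemma choose_mul_integral_Ioi_pow_succ_div_one_add_pow {n : ℕ} (hn : 2 < n) (k : ℕ) :
    (Nat.choose (n + k - 1) k : ℝ) * ∫ s in Ioi (0 : ℝ), s ^ (k + 1) / (1 + s) ^ (n + k) =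
      (k + 1) / (((n : ℝ) - 1) * ((n : ℝ) - 2)) := by
  obtain ⟨p, rfl⟩ : ∃ p, n = p + 3 := ⟨n - 3, by omega⟩
  rw [show p + 3 + k = k + 1 + p + 2 by ring, integral_Ioi_pow_div_one_add_pow,
    show k + 1 + p + 2 - 1 = k + 1 + p + 1 by omega, cast_choose ℝ (by omega : k ≤ k + 1 + p + 1),
    show k + 1 + p + 1 - k = p + 1 + 1 by omega, factorial_succ k, factorial_succ (p + 1),
    factorial_succ p]
  push_cast
  rw [show (p : ℝ) + 3 - 1 = p + 2 by ring, show (p : ℝ) + 3 - 2 = p + 1 by ring]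
  field_simp
  ring

lemma Tn_id (ν : ℝ) {n : ℕ} (hn : 2 < n) (x : ℝ) :
    Tn ν n (fun s => s) x = (∑' k : ℕ, (k + 1) * ((n * x) ^ (k + 1) / dGamma ν (k + 1))) /
      (((n : ℝ) - 2) * eDunkl ν (n * x)) := by
  have hn1 : (n : ℝ) - 1 ≠ 0 := by
    have : (2 : ℝ) < n := by exact_mod_cast hn
    linarith
  -- the summand `g 0 / e_ν(nx)` of `Tn` lies inside the integral and the series (binder scope)
  have hterm : ∀ k : ℕ, (Nat.choose (n + k - 1) k : ℝ) * (n * x) ^ (k + 1) / dGamma ν (k + 1) *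
      ∫ s in Ioi (0 : ℝ), s ^ k / (1 + s) ^ (n + k) * s + 0 / eDunkl ν (n * x) =
      (((n : ℝ) - 1) * ((n : ℝ) - 2))⁻¹ * ((k + 1) * ((n * x) ^ (k + 1) / dGamma ν (k + 1))) := by
    intro k
    calc _ = ((Nat.choose (n + k - 1) k : ℝ) *
          ∫ s in Ioi (0 : ℝ), s ^ (k + 1) / (1 + s) ^ (n + k)) *
            ((n * x) ^ (k + 1) / dGamma ν (k + 1)) := by
          simp only [zero_div, add_zero, div_mul_eq_mul_div, ← pow_succ]
          ring
      _ = _ := by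
          rw [choose_mul_integral_Ioi_pow_succ_div_one_add_pow hn]
          field_simp
  simp only [Tn, tsum_congr hterm, tsum_mul_left]
  field_simp

theorem stmt1 (ν : ℝ) (hν : 0 ≤ ν) (n : ℕ) (hn : 2 < n) (x : ℝ) (hx : 0 ≤ x) :
    |Tn ν n (fun s => s) x - x| ≤ 2 / ((n : ℝ) - 2) * x + 2 * ν / ((n : ℝ) - 2) := by
  have hy : 0 ≤ (n : ℝ) * x := by positivity
  have hn2 : (0 : ℝ) < n - 2 := by
    have : (2 : ℝ) < n := by exact_mod_cast hn
    linarith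
  have hE := one_le_eDunkl hν hy
  have hS_le := tsum_succ_mul_pow_div_dGamma_succ_le hν hy
  have hS_ge := sub_mul_eDunkl_le_tsum_succ_mul_pow_div_dGamma_succ hν hy
  rw [Tn_id ν hn x]
  set E := eDunkl ν (n * x)
  set S := ∑' k : ℕ, (k + 1) * ((n * x) ^ (k + 1) / dGamma ν (k + 1))
  have hnE : 0 < (n - 2) * E := mul_pos hn2 (by linarith)
  have hdev : |S - (n - 2) * x * E| ≤ (2 * x + 2 * ν) * E :=
    abs_le.2 ⟨by nlinarith, by nlinarith⟩
  calc |S / ((n - 2) * E) - x| = |S - (n - 2) * x * E| / ((n - 2) * E) := by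
        rw [div_sub' hnE.ne', abs_div, abs_of_pos hnE]
        ring_nf
    _ ≤ (2 * x + 2 * ν) * E / ((n - 2) * E) := by gcongr
    _ = _ := by
        field_simp
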